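/- Let 𝒜 be a finite set of alternatives and let V be a set of valuations v : 𝒜 → ℝ, with a total order ≻ᵛ on V and a total order ≻ᵃ on 𝒜. If V is a monotone-implementability domain with respect to ≻ᵛ and ≻ᵃ (i.e., every function f : V → 𝒜 that is monotone with respect to ≻ᵛ and ≻ᵃ is implementable), then V is single-crossing with respect to ≻ᵛ and ≻ᵃ. -/
import Mathlib


/-- If every monotone function on a domain is implementable
(a monotone-implementability domain), then the domain is single-crossing. -/
theorem single_crossing_of_monotone_implementability
    {A V : Type*} [Fintype A] [LinearOrder A] [LinearOrder V]
    (val : V → A → ℝ)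
    (hmi : ∀ f : V → A, (∀ v v' : V, v < v' → f v ≤ f v') →
      ∃ P : V → ℝ, ∀ v v' : V, val v (f v') - P v' ≤ val v (f v) - P v) :
    ∀ v v' : V, v < v' → ∀ a a' : A, a < a' →
      val v a' - val v a ≤ val v' a' - val v' a := by
  intro v v' hvv a a' haa
  set f : V → A := fun w => if w ≤ v then a else a' with hf
  have hmono : ∀ w w' : V, w < w' → f w ≤ f w' := by
    intro w w' hww
    by_cases h' : w' ≤ v
    · have : w ≤ v := le_trans hww.le h'
      simp [hf, this, h']
    · by_cases h : w ≤ v <;> simp [hf, h, h', haa.le]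
  obtain ⟨P, hP⟩ := hmi f hmono
  have h1 := hP v v'
  have h2 := hP v' v
  have hfv : f v = a := by simp [hf]
  have hfv' : f v' = a' := by simp [hf, not_le.mpr hvv]
  rw [hfv, hfv'] at h1 h2
  linarith
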